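/- Let G be a real symmetric 3×3 matrix, θ ∈ ℝ, and Q = I₃ + sin(θ)·ê₃ + (1−cos(θ))·ê₃² (the rotation by angle θ about e₃ = (0,0,1)). Then ‖G(I₃ − Qᵀ)‖² = 2·(tr(G²) − ‖G e₃‖²)·(1 − cos θ). -/

import Mathlib

open Matrix Polynomial

noncomputable section

/-- The hat map sending `x ∈ ℝ³` to the skew-symmetric matrix `x̂` with `x̂ y = x × y`. -/
def hat (x : Fin 3 → ℝ) : Matrix (Fin 3) (Fin 3) ℝ :=
  !![0, -x 2, x 1; x 2, 0, -x 0; -x 1, x 0, 0]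

/-- The vee map, inverse of the hat map on skew-symmetric `3 × 3` matrices. -/
def vee (A : Matrix (Fin 3) (Fin 3) ℝ) : Fin 3 → ℝ :=
  ![A 2 1, A 0 2, A 1 0]

/-- `SO3 R` iff `R` is a rotation matrix: `RᵀR = I₃` and `det R = 1`. -/
def SO3 (R : Matrix (Fin 3) (Fin 3) ℝ) : Prop :=
  Rᵀ * R = 1 ∧ R.det = 1

/-- Frobenius inner product `⟨A,B⟩ = tr(AᵀB)`. -/
def finner (A B : Matrix (Fin 3) (Fin 3) ℝ) : ℝ := (Aᵀ * B).trace

/-- Frobenius norm `‖A‖ = √⟨A,A⟩`. -/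
def fnorm (A : Matrix (Fin 3) (Fin 3) ℝ) : ℝ := Real.sqrt (finner A A)

/-- Euclidean norm of a vector. -/
def vnorm {k : ℕ} (x : Fin k → ℝ) : ℝ := Real.sqrt (x ⬝ᵥ x)

/-- Third standard basis vector `e₃ = (0,0,1)` of `ℝ³`. -/
def e3 : Fin 3 → ℝ := ![0, 0, 1]

/-! For a unit axis `x` the hat matrix `K = x̂` satisfies `K³ = -K` and `K² = x xᵀ - I`, so the
polynomial `(I - Qᵀ)(I - Q)` in `K` collapses to `2 (1 - cos θ)(I - x xᵀ)`. Cycling the trace,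
`‖G (I - Qᵀ)‖² = tr (GᵀG (I - Qᵀ)(I - Q))`, and `tr (GᵀG x xᵀ) = ‖G x‖²`. -/

section Hat

variable (x : Fin 3 → ℝ)

theorem transpose_hat : (hat x)ᵀ = -hat x := by
  ext i j
  fin_cases i <;> fin_cases j <;> simp [hat]

theorem hat_mulVec_self : hat x *ᵥ x = 0 := by
  ext i
  fin_cases i <;> simp [hat, mulVec, dotProduct, Fin.sum_univ_three] <;> ring

theorem hat_mul_hat : hat x * hat x = vecMulVec x x - (x ⬝ᵥ x) • 1 := by
  ext i j
  fin_cases i <;> fin_cases j <;>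
    simp [hat, mul_apply, vecMulVec_apply, dotProduct, Fin.sum_univ_three] <;> ring

theorem hat_mul_hat_mul_hat : hat x * hat x * hat x = -(x ⬝ᵥ x) • hat x := by
  rw [Matrix.mul_assoc, hat_mul_hat, mul_sub, mul_vecMulVec, hat_mulVec_self, zero_vecMulVec,
    mul_smul_comm, Matrix.mul_one, zero_sub, neg_smul]

end Hat

def rodrigues (θ : ℝ) (x : Fin 3 → ℝ) : Matrix (Fin 3) (Fin 3) ℝ :=
  1 + Real.sin θ • hat x + (1 - Real.cos θ) • (hat x * hat x)

theorem transpose_rodrigues (θ : ℝ) (x : Fin 3 → ℝ) :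
    (rodrigues θ x)ᵀ = 1 - Real.sin θ • hat x + (1 - Real.cos θ) • (hat x * hat x) := by
  simp only [rodrigues, transpose_add, transpose_smul, transpose_one, transpose_mul,
    transpose_hat, neg_mul, mul_neg, neg_neg, smul_neg, ← sub_eq_add_neg]

theorem one_sub_transpose_rodrigues_mul_one_sub_rodrigues (θ : ℝ) {x : Fin 3 → ℝ}
    (hx : x ⬝ᵥ x = 1) :
    (1 - (rodrigues θ x)ᵀ) * (1 - rodrigues θ x) =
      (2 * (1 - Real.cos θ)) • (1 - vecMulVec x x) := by
  have hcube : hat x * hat x * hat x = -hat x := by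
    rw [hat_mul_hat_mul_hat, hx, neg_smul, one_smul]
  have hsquare : 1 - vecMulVec x x = -(hat x * hat x) := by
    rw [hat_mul_hat, hx, one_smul, neg_sub]
  have hleft : 1 - (rodrigues θ x)ᵀ =
      Real.sin θ • hat x - (1 - Real.cos θ) • (hat x * hat x) := by
    rw [transpose_rodrigues]; abel
  have hright : 1 - rodrigues θ x =
      -(Real.sin θ • hat x) - (1 - Real.cos θ) • (hat x * hat x) := by
    rw [rodrigues]; abel
  rw [hleft, hright, hsquare]
  simp only [sub_mul, mul_sub, mul_neg, neg_mul, smul_mul_smul_comm, ← Matrix.mul_assoc, hcube]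
  -- the `K²` coefficient is `-(sin² θ + (1 - cos θ)²) = -2 (1 - cos θ)`; the `K` terms cancel
  match_scalars
  · linear_combination (-1 : ℝ) * Real.sin_sq_add_cos_sq θ
  · ring

theorem trace_transpose_mul_self_mul_vecMulVec {m n R : Type*} [Fintype m] [Fintype n] [CommRing R]
    (A : Matrix m n R) (x : n → R) :
    (Aᵀ * A * vecMulVec x x).trace = (A *ᵥ x) ⬝ᵥ (A *ᵥ x) := by
  rw [mul_vecMulVec, trace_vecMulVec, ← mulVec_mulVec, dotProduct_comm, dotProduct_mulVec,
    vecMul_transpose]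

theorem trace_transpose_mul_self_mul {l m n R : Type*} [Fintype l] [Fintype m] [Fintype n]
    [CommRing R] (A : Matrix l m R) (M : Matrix m n R) :
    ((A * M)ᵀ * (A * M)).trace = (Aᵀ * A * (M * Mᵀ)).trace := by
  rw [transpose_mul, Matrix.mul_assoc, trace_mul_comm]
  simp only [Matrix.mul_assoc]

theorem sq_fnorm (A : Matrix (Fin 3) (Fin 3) ℝ) : fnorm A ^ 2 = finner A A := by
  refine Real.sq_sqrt ?_
  simpa [finner, conjTranspose_eq_transpose_of_trivial] using
    (posSemidef_conjTranspose_mul_self A).trace_nonneg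

theorem sq_vnorm {k : ℕ} (x : Fin k → ℝ) : vnorm x ^ 2 = x ⬝ᵥ x :=
  Real.sq_sqrt (by simpa using dotProduct_self_star_nonneg x)

/-- for symmetric `G` and `Q` the rotation by angle `θ` about `e₃`,
`‖G(I₃ − Qᵀ)‖² = 2 (tr(G²) − ‖G e₃‖²)(1 − cos θ)`. -/
theorem stmt_11 (G : Matrix (Fin 3) (Fin 3) ℝ) (hG : Gᵀ = G) (θ : ℝ)
    (Q : Matrix (Fin 3) (Fin 3) ℝ)
    (hQ : Q = 1 + Real.sin θ • hat e3 + (1 - Real.cos θ) • (hat e3 * hat e3)) :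
    fnorm (G * (1 - Qᵀ)) ^ 2 = 2 * ((G * G).trace - vnorm (G.mulVec e3) ^ 2) * (1 - Real.cos θ) := by
  obtain rfl : Q = rodrigues θ e3 := hQ
  have he3 : e3 ⬝ᵥ e3 = 1 := by simp [e3, dotProduct, Fin.sum_univ_three]
  rw [sq_fnorm, finner, trace_transpose_mul_self_mul, transpose_sub, transpose_one,
    transpose_transpose, one_sub_transpose_rodrigues_mul_one_sub_rodrigues θ he3, mul_smul_comm,
    trace_smul, mul_sub (Gᵀ * G), Matrix.mul_one, trace_sub,
    trace_transpose_mul_self_mul_vecMulVec, hG, sq_vnorm, smul_eq_mul]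
  ring
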